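/- Let G = (V, E_1, …, E_T) and H = (W, F_1, …, F_U) be temporal graphs with vertices u_1, …, u_{|V|} and v_1, …, v_{|W|}, vertex signature functions f_{G_s} : V → Q^k and f_{H_t} : W → Q^k, a metric d on Q^k, and nonnegative deletion costs Δ_{G_s}(u), Δ_{H_t}(v) satisfying Δ_{G_s}(u_i) + Δ_{H_t}(v_j) ≥ d(f_{G_s}(u_i), f_{H_t}(v_j)) for all s ∈ [T], t ∈ [U], i ∈ [|V|], j ∈ [|W|]. Define d_{s,t,i,j} = d(f_{G_s}(u_i), f_{H_t}(v_j)) for i ∈ [|V|], j ∈ [|W|]; d_{s,t,i,|W|+1} = Δ_{G_s}(u_i) for i ∈ [|V|]; d_{s,t,|V|+1,j} = Δ_{H_t}(v_j) for j ∈ [|W|]; and d_{s,t,|V|+1,|W|+1} = 0. Then the minimum of Σ_{s∈[T]} Σ_{t∈[U]} Σ_{i∈[|V|+1]} Σ_{j∈[|W|+1]} d_{s,t,i,j} · w_{s,t} · m_{i,j} over all binary variables m_{i,j}, w_{s,t} ∈ {0,1} satisfying (a) Σ_{j∈[|W|+1]} m_{i,j} = 1 for all i ∈ [|V|], (b) Σ_{i∈[|V|+1]}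 m_{i,j} = 1 for all j ∈ [|W|], (c) w_{1,1} = 1, (d) w_{s,t} ≤ w_{s+1,t+1} + w_{s,t+1} + w_{s+1,t} for all (s,t) ∈ [T−1]×[U−1], (e) w_{T,t} ≤ w_{T,t+1} for all t ∈ [U−1], and (f) w_{s,U} ≤ w_{s+1,U} for all s ∈ [T−1], equals dtgw(G, H). -/

import Mathlib

/-!
A feasible point `(m, w)` of the program encodes a partial vertex mapping (the pairs `(i, j)`
with `m i j = 1` off the dummy row and column) and a set of layer pairs, the support of `w`, which
by constraints (c)–(f) contains a warping path: from `(1, 1)` one can always step inside the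
support until `(T, U)` is reached. The objective is the sum, over the support of `w`, of the layer
costs of that mapping. Conversely, a vertex mapping together with the indicator of a warping path
is a feasible point whose objective is its dtgw cost. Since all costs are nonnegative, shrinking
the support to the path does not increase the objective, and since matching two deleted vertices
costs at most deleting both, completing the partial mapping to a vertex mapping does not either.
So every value of the program dominates a dtgw value and every dtgw value is a value of the
program; the least of the finitely many dtgw values is therefore least for both.
-/

/-- A single step of a warping path: diagonal, vertical, or horizontal. -/
def WStep (a b : ℕ × ℕ) : Prop :=
  b = (a.1 + 1, a.2 + 1) ∨ b = (a.1, a.2 + 1) ∨ b = (a.1 + 1, a.2)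

/-- `l` is the enumeration `p₁, …, p_L` of a warping path of order `T × U`:
it is nonempty, starts at `(1,1)`, ends at `(T,U)`, and consecutive entries differ
by a warping step. -/
def IsWarpingList (T U : ℕ) (l : List (ℕ × ℕ)) : Prop :=
  l ≠ [] ∧ l.head? = some (1, 1) ∧ l.getLast? = some (T, U) ∧ l.Chain' WStep

/-- `p` (as a set of pairs) is a warping path of order `T × U`. -/
def IsWarpingPath (T U : ℕ) (p : Finset (ℕ × ℕ)) : Prop :=
  ∃ l : List (ℕ × ℕ), IsWarpingList T U l ∧ l.toFinset = p

/-- `M` is a vertex mapping between the finite vertex sets `V` and `W`: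
it consists of `min |V| |W|` pairs, and every vertex of `V` (resp. `W`)
occurs in at most one pair of `M`. -/
def IsVertexMapping {V W : Type*} [Fintype V] [Fintype W]
    (M : Finset (V × W)) : Prop :=
  M.card = min (Fintype.card V) (Fintype.card W) ∧
  (∀ a ∈ M, ∀ b ∈ M, a.1 = b.1 → a = b) ∧
  (∀ a ∈ M, ∀ b ∈ M, a.2 = b.2 → a = b)

/-- The coefficient `d_{s,t,i,j}` of the quadratic program: the cost of matching
vertex `u_i` in layer `s` to vertex `v_j` in layer `t`, where index `nV` (the
`(|V|+1)`-st index) resp. `nW` plays the role of the artificial "deletion"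
vertex. -/
def QPcoeff {k : ℕ} (nV nW : ℕ)
    (f : ℕ → Fin nV → (Fin k → ℚ)) (g : ℕ → Fin nW → (Fin k → ℚ))
    (d : (Fin k → ℚ) → (Fin k → ℚ) → ℚ)
    (ΔG : ℕ → Fin nV → ℚ) (ΔH : ℕ → Fin nW → ℚ)
    (s t : ℕ) (i : Fin (nV + 1)) (j : Fin (nW + 1)) : ℚ :=
  if hi : (i : ℕ) < nV then
    if hj : (j : ℕ) < nW then d (f s ⟨i, hi⟩) (g t ⟨j, hj⟩)
    else ΔG s ⟨i, hi⟩
  else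
    if hj : (j : ℕ) < nW then ΔH t ⟨j, hj⟩
    else 0

open Finset

theorem List.IsChain.exists_rel_of_mem {α : Type*} {R : α → α → Prop} {l : List α}
    (h : l.IsChain R) {a : α} (ha : a ∈ l) (hlast : l.getLast? ≠ some a) : ∃ b ∈ l, R a b := by
  induction l with
  | nil => simp at ha
  | cons x t ih =>
    cases t with
    | nil => simp_all
    | cons y t =>
      rcases List.mem_cons.1 ha with rfl | ha
      · exact ⟨y, by simp, List.rel_of_isChain_cons_cons h⟩
      · obtain ⟨b, hb, hab⟩ := ih h.tail ha (by simpa [List.getLast?_cons_cons] using hlast)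
        exact ⟨b, List.mem_cons_of_mem _ hb, hab⟩

theorem eq_of_apply_eq_one_of_sum_eq_one {ι : Type*} [Fintype ι] [DecidableEq ι] {r : ι → ℕ}
    (h : ∑ i, r i = 1) {a b : ι} (ha : r a = 1) (hb : r b = 1) : a = b := by
  by_contra hab
  have := sum_le_sum_of_subset (f := r) (subset_univ {a, b})
  rw [sum_pair hab, ha, hb, h] at this
  omega

theorem Fin.apply_last_eq_one_iff_of_sum_eq_one {n : ℕ} {r : Fin (n + 1) → ℕ} (h : ∑ j, r j = 1) :
    r (Fin.last n) = 1 ↔ ∀ j : Fin n, r j.castSucc = 0 := by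
  rw [Fin.sum_univ_castSucc] at h
  have hzero := sum_eq_zero_iff (s := univ) (f := fun j : Fin n => r j.castSucc)
  simp only [mem_univ, forall_const] at hzero
  rw [← hzero]
  omega

theorem Finset.sum_mul_eq_sum_filter_of_binary {ι : Type*} (s : Finset ι) {w : ι → ℕ}
    (hw : ∀ i, w i = 0 ∨ w i = 1) (F : ι → ℚ) :
    ∑ i ∈ s, F i * w i = ∑ i ∈ s with w i = 1, F i := by
  rw [sum_filter]
  refine sum_congr rfl fun i _ => ?_
  rcases hw i with h | h <;> simp [h]

theorem IsLeast.of_subset_of_forall_exists_le {α : Type*} [Preorder α] {s t : Set α} {a : α}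
    (ha : IsLeast s a) (hst : s ⊆ t) (ht : ∀ b ∈ t, ∃ c ∈ s, c ≤ b) : IsLeast t a :=
  ⟨hst ha.1, fun b hb => let ⟨_, hc, hcb⟩ := ht b hb; (ha.2 hc).trans hcb⟩

theorem WStep.le {a b : ℕ × ℕ} (h : WStep a b) : a ≤ b := by
  rcases h with rfl | rfl | rfl <;> simp [Prod.le_def]

theorem WStep.sub_add_sub_lt {a b : ℕ × ℕ} {T U : ℕ} (h : WStep a b) (hb : b ≤ (T, U)) :
    (T - b.1) + (U - b.2) < (T - a.1) + (U - a.2) := by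
  rw [Prod.le_def] at hb
  rcases h with rfl | rfl | rfl <;> dsimp only at hb ⊢ <;> omega

section WarpingPath

variable {T U : ℕ}

theorem IsWarpingList.mem_Icc {l : List (ℕ × ℕ)} (hl : IsWarpingList T U l) {q : ℕ × ℕ}
    (hq : q ∈ l) : q ∈ Icc (1, 1) (T, U) := by
  obtain ⟨-, hhead, hlast, hchain⟩ := hl
  have hle : l.Pairwise (· ≤ ·) := List.isChain_iff_pairwise.1 (hchain.imp fun _ _ => WStep.le)
  rw [Finset.mem_Icc, ← List.head_of_head?_eq_some hhead, ← List.getLast_of_getLast?_eq_some hlast]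
  exact ⟨hle.rel_head hq, hle.rel_getLast hq⟩

theorem IsWarpingPath.subset_Icc {p : Finset (ℕ × ℕ)} (hp : IsWarpingPath T U p) :
    p ⊆ Icc (1, 1) (T, U) := by
  obtain ⟨l, hl, rfl⟩ := hp
  exact fun q hq => hl.mem_Icc (List.mem_toFinset.1 hq)

theorem IsWarpingPath.exists_wstep {p : Finset (ℕ × ℕ)} (hp : IsWarpingPath T U p) {q : ℕ × ℕ}
    (hq : q ∈ p) (hne : q ≠ (T, U)) : ∃ q' ∈ p, WStep q q' := by
  obtain ⟨l, ⟨-, -, hlast, hchain⟩, rfl⟩ := hp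
  simpa using hchain.exists_rel_of_mem (List.mem_toFinset.1 hq) (by simpa [hlast] using hne.symm)

theorem exists_isWarpingList_of_forall_exists_wstep {P : ℕ × ℕ → Prop}
    (hbound : ∀ q, P q → q ≤ (T, U)) (h₁₁ : P (1, 1))
    (hstep : ∀ q, P q → q ≠ (T, U) → ∃ q', WStep q q' ∧ P q') :
    ∃ l, IsWarpingList T U l ∧ ∀ q ∈ l, P q := by
  let R : ℕ × ℕ → ℕ × ℕ → Prop := fun a b => WStep a b ∧ P b
  have hreach : ∀ q, P q → Relation.ReflTransGen R q (T, U) := by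
    intro q hq
    induction hn : (T - q.1) + (U - q.2) using Nat.strong_induction_on generalizing q with
    | _ n ih =>
      by_cases hend : q = (T, U)
      · rw [hend]
      obtain ⟨q', hstep, hq'⟩ := hstep q hq hend
      exact .head ⟨hstep, hq'⟩ (ih _ (hn ▸ hstep.sub_add_sub_lt (hbound q' hq')) q' hq' rfl)
  obtain ⟨l, hchain, hlast⟩ := List.exists_isChain_cons_of_relationReflTransGen (hreach _ h₁₁)
  refine ⟨(1, 1) :: l, ⟨by simp, rfl, ?_, hchain.imp fun _ _ => And.left⟩, ?_⟩
  · rw [List.getLast?_eq_some_getLast (List.cons_ne_nil _ _), hlast]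
  · exact List.forall_mem_cons.2 ⟨h₁₁, hchain.cons_induction _ _ (fun _ _ h _ => h.2) h₁₁⟩

theorem exists_isWarpingPath (hT : 1 ≤ T) (hU : 1 ≤ U) : ∃ p, IsWarpingPath T U p := by
  obtain ⟨l, hl, -⟩ := exists_isWarpingList_of_forall_exists_wstep
    (P := (· ≤ (T, U))) (fun _ => id) (Prod.mk_le_mk.2 ⟨hT, hU⟩) fun q hq hne => by
      rw [Prod.le_def] at hq
      by_cases hs : q.1 < T
      · exact ⟨(q.1 + 1, q.2), Or.inr (Or.inr rfl), Prod.mk_le_mk.2 ⟨hs, hq.2⟩⟩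
      · refine ⟨(q.1, q.2 + 1), Or.inr (Or.inl rfl), Prod.mk_le_mk.2 ⟨hq.1, ?_⟩⟩
        by_contra
        exact hne (Prod.ext (by omega) (by omega))
  exact ⟨_, l, hl, rfl⟩

def IsWarpingVariable (T U : ℕ) (w : ℕ → ℕ → ℕ) : Prop :=
  (∀ s t, w s t = 0 ∨ w s t = 1) ∧ w 1 1 = 1 ∧
    (∀ s t, 1 ≤ s → s ≤ T - 1 → 1 ≤ t → t ≤ U - 1 →
      w s t ≤ w (s + 1) (t + 1) + w s (t + 1) + w (s + 1) t) ∧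
    (∀ t, 1 ≤ t → t ≤ U - 1 → w T t ≤ w T (t + 1)) ∧
    (∀ s, 1 ≤ s → s ≤ T - 1 → w s U ≤ w (s + 1) U)

theorem IsWarpingVariable.exists_wstep {w : ℕ → ℕ → ℕ} (hw : IsWarpingVariable T U w)
    {s t : ℕ} (hs : 1 ≤ s) (ht : 1 ≤ t) (hsT : s ≤ T) (htU : t ≤ U) (hwst : w s t = 1)
    (hne : (s, t) ≠ (T, U)) : ∃ s' t', WStep (s, t) (s', t') ∧ s' ≤ T ∧ t' ≤ U ∧ w s' t' = 1 := by
  obtain ⟨hbin, -, hinner, hrowT, hcolU⟩ := hw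
  rcases hsT.lt_or_eq with hsT | rfl <;> rcases htU.lt_or_eq with htU | rfl
  · have := hinner s t hs (by omega) ht (by omega)
    rcases hbin (s + 1) (t + 1) with h | h
    · rcases hbin s (t + 1) with h' | h'
      · exact ⟨s + 1, t, Or.inr (Or.inr rfl), by omega, by omega, by
          rcases hbin (s + 1) t with h'' | h'' <;> omega⟩
      · exact ⟨s, t + 1, Or.inr (Or.inl rfl), by omega, by omega, h'⟩
    · exact ⟨s + 1, t + 1, Or.inl rfl, by omega, by omega, h⟩
  · have := hcolU s hs (by omega)
    exact ⟨s + 1, t, Or.inr (Or.inr rfl), by omega, le_rfl, by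
      rcases hbin (s + 1) t with h | h <;> omega⟩
  · have := hrowT t ht (by omega)
    exact ⟨s, t + 1, Or.inr (Or.inl rfl), le_rfl, by omega, by
      rcases hbin s (t + 1) with h | h <;> omega⟩
  · exact absurd rfl hne

theorem IsWarpingVariable.exists_isWarpingPath {w : ℕ → ℕ → ℕ} (hw : IsWarpingVariable T U w)
    (hT : 1 ≤ T) (hU : 1 ≤ U) : ∃ p, IsWarpingPath T U p ∧ ∀ q ∈ p, w q.1 q.2 = 1 := by
  obtain ⟨l, hl, hlw⟩ := exists_isWarpingList_of_forall_exists_wstep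
    (P := fun q => q ∈ Icc (1, 1) (T, U) ∧ w q.1 q.2 = 1)
    (fun q hq => (mem_Icc.1 hq.1).2)
    ⟨mem_Icc.2 ⟨le_rfl, Prod.mk_le_mk.2 ⟨hT, hU⟩⟩, hw.2.1⟩
    fun ⟨s, t⟩ ⟨hst, hwst⟩ hne => by
      simp only [mem_Icc, Prod.mk_le_mk] at hst
      obtain ⟨s', t', hstep, hs', ht', hw'⟩ :=
        hw.exists_wstep hst.1.1 hst.1.2 hst.2.1 hst.2.2 hwst hne
      exact ⟨(s', t'), hstep, mem_Icc.2
        ⟨(Prod.mk_le_mk.2 hst.1).trans hstep.le, Prod.mk_le_mk.2 ⟨hs', ht'⟩⟩, hw'⟩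
  exact ⟨_, ⟨l, hl, rfl⟩, fun q hq => (hlw q (List.mem_toFinset.1 hq)).2⟩

theorem IsWarpingPath.one_one_mem {p : Finset (ℕ × ℕ)} (hp : IsWarpingPath T U p) :
    (1, 1) ∈ p := by
  obtain ⟨l, ⟨-, hhead, -⟩, rfl⟩ := hp
  exact List.mem_toFinset.2 (List.mem_of_head? hhead)

theorem IsWarpingPath.isWarpingVariable_indicator {p : Finset (ℕ × ℕ)}
    (hp : IsWarpingPath T U p) : IsWarpingVariable T U fun s t => if (s, t) ∈ p then 1 else 0 := by
  have hsucc : ∀ s t, (s, t) ∈ p → (s, t) ≠ (T, U) → ∃ q' ∈ p, WStep (s, t) q' ∧ q' ≤ (T, U) :=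
    fun s t hst hne => (hp.exists_wstep hst hne).imp fun q' h =>
      ⟨h.1, h.2, (mem_Icc.1 (hp.subset_Icc h.1)).2⟩
  refine ⟨fun s t => by by_cases h : (s, t) ∈ p <;> simp [h], if_pos hp.one_one_mem,
    fun s t _ hs _ ht => ?_, fun t _ ht => ?_, fun s _ hs => ?_⟩
  · by_cases hst : (s, t) ∈ p
    · obtain ⟨q', hq', hstep, -⟩ := hsucc s t hst (by simp only [ne_eq, Prod.mk.injEq]; omega)
      rcases hstep with rfl | rfl | rfl <;> simp_all <;> omega
    · simp [hst]
  · by_cases hst : (T, t) ∈ p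
    · obtain ⟨q', hq', hstep, hle⟩ := hsucc T t hst (by simp only [ne_eq, Prod.mk.injEq]; omega)
      rcases hstep with rfl | rfl | rfl <;> simp_all
    · simp [hst]
  · by_cases hst : (s, U) ∈ p
    · obtain ⟨q', hq', hstep, hle⟩ := hsucc s U hst (by simp only [ne_eq, Prod.mk.injEq]; omega)
      rcases hstep with rfl | rfl | rfl <;> simp_all
    · simp [hst]

end WarpingPath

section MappingCost

variable {V W : Type*}

def IsPartialMatching (M : Finset (V × W)) : Prop :=
  Set.InjOn Prod.fst (M : Set (V × W)) ∧ Set.InjOn Prod.snd (M : Set (V × W))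

theorem isPartialMatching_empty : IsPartialMatching (∅ : Finset (V × W)) := by
  simp [IsPartialMatching]

variable [DecidableEq V] [DecidableEq W]

theorem IsPartialMatching.insert {M : Finset (V × W)} (hM : IsPartialMatching M) {v : V} {w : W}
    (hv : v ∉ M.image Prod.fst) (hw : w ∉ M.image Prod.snd) :
    IsPartialMatching (insert (v, w) M) := by
  simp only [IsPartialMatching, coe_insert, Set.injOn_insert
    (show (v, w) ∉ (M : Set (V × W)) from fun h => hv (mem_image_of_mem _ h))]
  simp only [← coe_image, mem_coe]
  exact ⟨⟨hM.1, hv⟩, hM.2, hw⟩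

variable [Fintype V] [Fintype W]

def mappingCost (c : V → W → ℚ) (δV : V → ℚ) (δW : W → ℚ) (M : Finset (V × W)) : ℚ :=
  ∑ a ∈ M, c a.1 a.2 + ∑ v ∈ univ \ M.image Prod.fst, δV v +
    ∑ w ∈ univ \ M.image Prod.snd, δW w

theorem IsPartialMatching.card_le {M : Finset (V × W)} (hM : IsPartialMatching M) :
    M.card ≤ min (Fintype.card V) (Fintype.card W) := by
  have hV := card_le_univ (M.image Prod.fst)
  have hW := card_le_univ (M.image Prod.snd)
  rw [card_image_of_injOn hM.1] at hV
  rw [card_image_of_injOn hM.2] at hW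
  exact le_min hV hW

theorem mappingCost_insert (c : V → W → ℚ) (δV : V → ℚ) (δW : W → ℚ) {M : Finset (V × W)}
    {v : V} {w : W} (hv : v ∉ M.image Prod.fst) (hw : w ∉ M.image Prod.snd) :
    mappingCost c δV δW (insert (v, w) M) = mappingCost c δV δW M + (c v w - δV v - δW w) := by
  have hvw : (v, w) ∉ M := fun h => hv (mem_image_of_mem _ h)
  simp only [mappingCost, sum_insert hvw, image_insert, sdiff_insert,
    sum_erase_eq_sub (mem_sdiff.2 ⟨mem_univ v, hv⟩),
    sum_erase_eq_sub (mem_sdiff.2 ⟨mem_univ w, hw⟩)]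
  ring

theorem mappingCost_nonneg {c : V → W → ℚ} {δV : V → ℚ} {δW : W → ℚ} (hc : ∀ v w, 0 ≤ c v w)
    (hδV : ∀ v, 0 ≤ δV v) (hδW : ∀ w, 0 ≤ δW w) (M : Finset (V × W)) :
    0 ≤ mappingCost c δV δW M := by
  unfold mappingCost
  have := sum_nonneg fun (a : V × W) (_ : a ∈ M) => hc a.1 a.2
  have := sum_nonneg fun v (_ : v ∈ univ \ M.image Prod.fst) => hδV v
  have := sum_nonneg fun w (_ : w ∈ univ \ M.image Prod.snd) => hδW w
  linarith

theorem IsPartialMatching.exists_isVertexMapping_mappingCost_le {M : Finset (V × W)}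
    (hM : IsPartialMatching M) : ∃ M', IsVertexMapping M' ∧ ∀ c δV δW,
      (∀ v w, c v w ≤ δV v + δW w) → mappingCost c δV δW M' ≤ mappingCost c δV δW M := by
  induction hn : min (Fintype.card V) (Fintype.card W) - M.card generalizing M with
  | zero =>
    exact ⟨M, ⟨by have := hM.card_le; omega, hM.1, hM.2⟩, fun _ _ _ _ => le_rfl⟩
  | succ n ih =>
    have hlt : M.card < min (Fintype.card V) (Fintype.card W) := by omega
    obtain ⟨v, -, hv⟩ := exists_mem_notMem_of_card_lt_card
      (s := M.image Prod.fst) (t := univ) (by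
        rw [card_image_of_injOn hM.1, card_univ]; omega)
    obtain ⟨w, -, hw⟩ := exists_mem_notMem_of_card_lt_card
      (s := M.image Prod.snd) (t := univ) (by
        rw [card_image_of_injOn hM.2, card_univ]; omega)
    have hvw : (v, w) ∉ M := fun h => hv (mem_image_of_mem _ h)
    obtain ⟨M', hM', hle⟩ := ih (hM.insert hv hw) (by rw [card_insert_of_notMem hvw]; omega)
    refine ⟨M', hM', fun c δV δW hc => (hle c δV δW hc).trans ?_⟩
    rw [mappingCost_insert c δV δW hv hw]
    linarith [hc v w]

def layerCost {X : Type*} (f : ℕ → V → X) (g : ℕ → W → X) (d : X → X → ℚ) (ΔG : ℕ → V → ℚ)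
    (ΔH : ℕ → W → ℚ) (q : ℕ × ℕ) (M : Finset (V × W)) : ℚ :=
  mappingCost (fun v w => d (f q.1 v) (g q.2 w)) (ΔG q.1) (ΔH q.2) M

end MappingCost

section QuadraticProgram

variable {nV nW : ℕ}

def IsMappingVariable (m : Fin (nV + 1) → Fin (nW + 1) → ℕ) : Prop :=
  (∀ i j, m i j = 0 ∨ m i j = 1) ∧ (∀ i : Fin nV, ∑ j, m i.castSucc j = 1) ∧
    ∀ j : Fin nW, ∑ i, m i j.castSucc = 1

def mappingOf (m : Fin (nV + 1) → Fin (nW + 1) → ℕ) : Finset (Fin nV × Fin nW) :=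
  {a | m a.1.castSucc a.2.castSucc = 1}

def mappingVariable (M : Finset (Fin nV × Fin nW)) : Fin (nV + 1) → Fin (nW + 1) → ℕ :=
  Fin.lastCases (Fin.lastCases 0 fun j => if j ∈ M.image Prod.snd then 0 else 1) fun i =>
    Fin.lastCases (if i ∈ M.image Prod.fst then 0 else 1) fun j => if (i, j) ∈ M then 1 else 0

theorem mappingOf_mappingVariable (M : Finset (Fin nV × Fin nW)) :
    mappingOf (mappingVariable M) = M := by
  ext a
  simp [mappingOf, mappingVariable]

theorem IsMappingVariable.isPartialMatching_mappingOf {m : Fin (nV + 1) → Fin (nW + 1) → ℕ}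
    (hm : IsMappingVariable m) : IsPartialMatching (mappingOf m) := by
  refine ⟨fun a ha b hb hab => ?_, fun a ha b hb hab => ?_⟩ <;>
    simp only [mappingOf, mem_coe, mem_filter, mem_univ, true_and] at ha hb <;> rw [← hab] at hb
  · exact Prod.ext hab
      (Fin.castSucc_injective _ (eq_of_apply_eq_one_of_sum_eq_one (hm.2.1 a.1) ha hb))
  · exact Prod.ext
      (Fin.castSucc_injective _ (eq_of_apply_eq_one_of_sum_eq_one (hm.2.2 a.2) ha hb)) hab

theorem isMappingVariable_mappingVariable {M : Finset (Fin nV × Fin nW)}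
    (hM : IsPartialMatching M) : IsMappingVariable (mappingVariable M) := by
  refine ⟨fun i j => ?_, fun i => ?_, fun j => ?_⟩
  · induction i using Fin.lastCases <;> induction j using Fin.lastCases <;>
      simp only [mappingVariable, Fin.lastCases_last, Fin.lastCases_castSucc] <;>
      (try split_ifs) <;> simp
  · have hle : #{j | (i, j) ∈ M} ≤ 1 := card_le_one.2 fun j hj j' hj' => by
      simp only [mem_filter, mem_univ, true_and] at hj hj'
      exact congrArg Prod.snd (hM.1 hj hj' rfl)
    have hpos : 0 < #{j | (i, j) ∈ M} ↔ i ∈ M.image Prod.fst := by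
      simp [card_pos, Finset.Nonempty]
    simp only [mappingVariable, Fin.sum_univ_castSucc, Fin.lastCases_castSucc,
      Fin.lastCases_last, sum_boole, Nat.cast_id]
    split_ifs with h <;> [have := hpos.2 h; have := mt hpos.1 h] <;> omega
  · have hle : #{i | (i, j) ∈ M} ≤ 1 := card_le_one.2 fun i hi i' hi' => by
      simp only [mem_filter, mem_univ, true_and] at hi hi'
      exact congrArg Prod.fst (hM.2 hi hi' rfl)
    have hpos : 0 < #{i | (i, j) ∈ M} ↔ j ∈ M.image Prod.snd := by
      simp [card_pos, Finset.Nonempty]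
    simp only [mappingVariable, Fin.sum_univ_castSucc, Fin.lastCases_castSucc,
      Fin.lastCases_last, sum_boole, Nat.cast_id]
    split_ifs with h <;> [have := hpos.2 h; have := mt hpos.1 h] <;> omega

variable {k : ℕ} (f : ℕ → Fin nV → (Fin k → ℚ)) (g : ℕ → Fin nW → (Fin k → ℚ))
  (d : (Fin k → ℚ) → (Fin k → ℚ) → ℚ) (ΔG : ℕ → Fin nV → ℚ) (ΔH : ℕ → Fin nW → ℚ)

@[simp]
theorem QPcoeff_castSucc_castSucc (s t : ℕ) (i : Fin nV) (j : Fin nW) :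
    QPcoeff nV nW f g d ΔG ΔH s t i.castSucc j.castSucc = d (f s i) (g t j) := by
  simp [QPcoeff]

@[simp]
theorem QPcoeff_castSucc_last (s t : ℕ) (i : Fin nV) :
    QPcoeff nV nW f g d ΔG ΔH s t i.castSucc (Fin.last nW) = ΔG s i := by
  simp [QPcoeff]

@[simp]
theorem QPcoeff_last_castSucc (s t : ℕ) (j : Fin nW) :
    QPcoeff nV nW f g d ΔG ΔH s t (Fin.last nV) j.castSucc = ΔH t j := by
  simp [QPcoeff]

@[simp]
theorem QPcoeff_last_last (s t : ℕ) :
    QPcoeff nV nW f g d ΔG ΔH s t (Fin.last nV) (Fin.last nW) = 0 := by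
  simp [QPcoeff]

theorem IsMappingVariable.sum_QPcoeff_mul {m : Fin (nV + 1) → Fin (nW + 1) → ℕ}
    (hm : IsMappingVariable m) (s t : ℕ) :
    ∑ i, ∑ j, QPcoeff nV nW f g d ΔG ΔH s t i j * (m i j : ℚ) =
      layerCost f g d ΔG ΔH (s, t) (mappingOf m) := by
  obtain ⟨hbin, hrow, hcol⟩ := hm
  have hpairs : ∑ i : Fin nV, ∑ j : Fin nW, d (f s i) (g t j) * (m i.castSucc j.castSucc : ℚ) =
      ∑ a ∈ mappingOf m, d (f s a.1) (g t a.2) := by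
    rw [← Fintype.sum_prod_type', sum_mul_eq_sum_filter_of_binary _ fun _ => hbin _ _]
    rfl
  have hdelV : ∑ i : Fin nV, ΔG s i * (m i.castSucc (Fin.last nW) : ℚ) =
      ∑ v ∈ univ \ (mappingOf m).image Prod.fst, ΔG s v := by
    rw [sum_mul_eq_sum_filter_of_binary _ fun _ => hbin _ _]
    congr 1
    ext i
    simp only [mappingOf, mem_filter, mem_univ, true_and, mem_sdiff, mem_image, Prod.exists,
      exists_and_right, exists_eq_right, not_exists]
    rw [Fin.apply_last_eq_one_iff_of_sum_eq_one (hrow i)]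
    exact forall_congr' fun j => by rcases hbin i.castSucc j.castSucc with h | h <;> simp [h]
  have hdelW : ∑ j : Fin nW, ΔH t j * (m (Fin.last nV) j.castSucc : ℚ) =
      ∑ w ∈ univ \ (mappingOf m).image Prod.snd, ΔH t w := by
    rw [sum_mul_eq_sum_filter_of_binary _ fun _ => hbin _ _]
    congr 1
    ext j
    simp only [mappingOf, mem_filter, mem_univ, true_and, mem_sdiff, mem_image, Prod.exists,
      exists_eq_right, not_exists]
    rw [Fin.apply_last_eq_one_iff_of_sum_eq_one (hcol j)]
    exact forall_congr' fun i => by rcases hbin i.castSucc j.castSucc with h | h <;> simp [h]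
  simp only [Fin.sum_univ_castSucc, QPcoeff_castSucc_castSucc, QPcoeff_castSucc_last,
    QPcoeff_last_castSucc, QPcoeff_last_last, zero_mul, add_zero, sum_add_distrib]
  rw [hpairs, hdelV, hdelW, add_right_comm]
  rfl

variable (T U : ℕ)

def qpObjective (m : Fin (nV + 1) → Fin (nW + 1) → ℕ) (w : ℕ → ℕ → ℕ) : ℚ :=
  ∑ s ∈ Icc 1 T, ∑ t ∈ Icc 1 U, ∑ i, ∑ j,
    QPcoeff nV nW f g d ΔG ΔH s t i j * (w s t : ℚ) * (m i j : ℚ)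

def dtgwValues : Set ℚ :=
  {x | ∃ (M : Finset (Fin nV × Fin nW)) (p : Finset (ℕ × ℕ)),
    IsVertexMapping M ∧ IsWarpingPath T U p ∧ x = ∑ q ∈ p, layerCost f g d ΔG ΔH q M}

variable {f g d ΔG ΔH T U}

theorem IsMappingVariable.qpObjective_eq {m : Fin (nV + 1) → Fin (nW + 1) → ℕ}
    (hm : IsMappingVariable m) {w : ℕ → ℕ → ℕ} (hw : ∀ s t, w s t = 0 ∨ w s t = 1) :
    qpObjective f g d ΔG ΔH T U m w =
      ∑ q ∈ Icc (1, 1) (T, U) with w q.1 q.2 = 1, layerCost f g d ΔG ΔH q (mappingOf m) := by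
  rw [← Icc_product_Icc, ← sum_mul_eq_sum_filter_of_binary _ fun q => hw q.1 q.2,
    sum_product]
  refine sum_congr rfl fun s _ => sum_congr rfl fun t _ => ?_
  simp only [← hm.sum_QPcoeff_mul, sum_mul, mul_right_comm _ (w s t : ℚ)]

theorem qpObjective_mappingVariable_indicator {M : Finset (Fin nV × Fin nW)}
    (hM : IsVertexMapping M) {p : Finset (ℕ × ℕ)} (hp : IsWarpingPath T U p) :
    qpObjective f g d ΔG ΔH T U (mappingVariable M) (fun s t => if (s, t) ∈ p then 1 else 0) =
      ∑ q ∈ p, layerCost f g d ΔG ΔH q M := by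
  rw [(isMappingVariable_mappingVariable ⟨hM.2.1, hM.2.2⟩).qpObjective_eq
    hp.isWarpingVariable_indicator.1, mappingOf_mappingVariable]
  congr 1
  ext q
  simpa using fun hq => hp.subset_Icc hq

theorem exists_isLeast_dtgwValues (hT : 1 ≤ T) (hU : 1 ≤ U) :
    ∃ x, IsLeast (dtgwValues f g d ΔG ΔH T U) x := by
  have hfin : (dtgwValues f g d ΔG ΔH T U).Finite := by
    refine ((Set.finite_univ.prod (Icc (1, 1) (T, U)).powerset.finite_toSet).image
      fun Mp : Finset (Fin nV × Fin nW) × Finset (ℕ × ℕ) =>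
        ∑ q ∈ Mp.2, layerCost f g d ΔG ΔH q Mp.1).subset ?_
    rintro _ ⟨M, p, -, hp, rfl⟩
    exact ⟨(M, p), ⟨trivial, mem_powerset.2 hp.subset_Icc⟩, rfl⟩
  obtain ⟨p, hp⟩ := exists_isWarpingPath hT hU
  obtain ⟨M, hM, -⟩ :=
    (isPartialMatching_empty (V := Fin nV) (W := Fin nW)).exists_isVertexMapping_mappingCost_le
  exact hfin.isCompact.exists_isLeast ⟨_, M, p, hM, hp, rfl⟩

theorem exists_mem_dtgwValues_le_qpObjective (hT : 1 ≤ T) (hU : 1 ≤ U)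
    (hd : ∀ a b, 0 ≤ d a b) (hΔG : ∀ s i, 0 ≤ ΔG s i) (hΔH : ∀ t j, 0 ≤ ΔH t j)
    (hΔd : ∀ q ∈ Icc (1, 1) (T, U), ∀ i j, d (f q.1 i) (g q.2 j) ≤ ΔG q.1 i + ΔH q.2 j)
    {m : Fin (nV + 1) → Fin (nW + 1) → ℕ} (hm : IsMappingVariable m) {w : ℕ → ℕ → ℕ}
    (hw : IsWarpingVariable T U w) :
    ∃ x ∈ dtgwValues f g d ΔG ΔH T U, x ≤ qpObjective f g d ΔG ΔH T U m w := by
  obtain ⟨p, hp, hpw⟩ := hw.exists_isWarpingPath hT hU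
  obtain ⟨M, hM, hMle⟩ := hm.isPartialMatching_mappingOf.exists_isVertexMapping_mappingCost_le
  refine ⟨_, ⟨M, p, hM, hp, rfl⟩, ?_⟩
  rw [hm.qpObjective_eq hw.1]
  calc ∑ q ∈ p, layerCost f g d ΔG ΔH q M
      ≤ ∑ q ∈ p, layerCost f g d ΔG ΔH q (mappingOf m) :=
        sum_le_sum fun q hq => hMle _ _ _ (hΔd q (hp.subset_Icc hq))
    _ ≤ ∑ q ∈ Icc (1, 1) (T, U) with w q.1 q.2 = 1, layerCost f g d ΔG ΔH q (mappingOf m) :=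
        sum_le_sum_of_subset_of_nonneg (fun q hq => mem_filter.2 ⟨hp.subset_Icc hq, hpw q hq⟩)
          fun q _ _ => mappingCost_nonneg (fun _ _ => hd _ _) (hΔG _) (hΔH _) _

end QuadraticProgram

theorem qp_value_eq_dtgw_general {k : ℕ} (nV nW : ℕ) (T U : ℕ) (hT : 1 ≤ T) (hU : 1 ≤ U)
    (f : ℕ → Fin nV → (Fin k → ℚ)) (g : ℕ → Fin nW → (Fin k → ℚ))
    (d : (Fin k → ℚ) → (Fin k → ℚ) → ℚ)
    (hd0 : ∀ a b, d a b = 0 ↔ a = b)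
    (hdsymm : ∀ a b, d a b = d b a)
    (hdtri : ∀ a b c, d a c ≤ d a b + d b c)
    (ΔG : ℕ → Fin nV → ℚ) (ΔH : ℕ → Fin nW → ℚ)
    (hΔG0 : ∀ s i, 0 ≤ ΔG s i) (hΔH0 : ∀ t j, 0 ≤ ΔH t j)
    (hΔd : ∀ s, 1 ≤ s → s ≤ T → ∀ t, 1 ≤ t → t ≤ U → ∀ i j,
      d (f s i) (g t j) ≤ ΔG s i + ΔH t j) :
    ∃ x : ℚ,
      IsLeast {x : ℚ |
        ∃ (m : Fin (nV + 1) → Fin (nW + 1) → ℕ) (w : ℕ → ℕ → ℕ),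
          (∀ i j, m i j = 0 ∨ m i j = 1) ∧
          (∀ s t, w s t = 0 ∨ w s t = 1) ∧
          (∀ i : Fin nV, ∑ j : Fin (nW + 1), m i.castSucc j = 1) ∧
          (∀ j : Fin nW, ∑ i : Fin (nV + 1), m i j.castSucc = 1) ∧
          w 1 1 = 1 ∧
          (∀ s t, 1 ≤ s → s ≤ T - 1 → 1 ≤ t → t ≤ U - 1 →
            w s t ≤ w (s + 1) (t + 1) + w s (t + 1) + w (s + 1) t) ∧
          (∀ t, 1 ≤ t → t ≤ U - 1 → w T t ≤ w T (t + 1)) ∧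
          (∀ s, 1 ≤ s → s ≤ T - 1 → w s U ≤ w (s + 1) U) ∧
          x = ∑ s ∈ Finset.Icc 1 T, ∑ t ∈ Finset.Icc 1 U,
              ∑ i : Fin (nV + 1), ∑ j : Fin (nW + 1),
                QPcoeff nV nW f g d ΔG ΔH s t i j * (w s t : ℚ) * (m i j : ℚ)} x ∧
      IsLeast {x : ℚ |
        ∃ (M : Finset (Fin nV × Fin nW)) (p : Finset (ℕ × ℕ)),
          IsVertexMapping M ∧ IsWarpingPath T U p ∧
          x = ∑ q ∈ p, ((∑ a ∈ M, d (f q.1 a.1) (g q.2 a.2)) +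
            (∑ v ∈ Finset.univ \ M.image Prod.fst, ΔG q.1 v) +
            (∑ w' ∈ Finset.univ \ M.image Prod.snd, ΔH q.2 w'))} x := by
  have hd : ∀ a b, 0 ≤ d a b := fun a b => by
    linarith [hdtri a b a, hdsymm a b, (hd0 a a).2 rfl]
  have hΔd' : ∀ q ∈ Icc (1, 1) (T, U), ∀ i j, d (f q.1 i) (g q.2 j) ≤ ΔG q.1 i + ΔH q.2 j :=
    fun q hq => by
      simp only [mem_Icc, Prod.le_def] at hq
      exact hΔd _ hq.1.1 hq.2.1 _ hq.1.2 hq.2.2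
  obtain ⟨x, hx⟩ : ∃ x, IsLeast (dtgwValues f g d ΔG ΔH T U) x := exists_isLeast_dtgwValues hT hU
  refine ⟨x, hx.of_subset_of_forall_exists_le ?_ ?_, hx⟩
  · rintro _ ⟨M, p, hM, hp, rfl⟩
    obtain ⟨hmb, hrow, hcol⟩ := isMappingVariable_mappingVariable ⟨hM.2.1, hM.2.2⟩
    obtain ⟨hwb, h₁₁, hinner, hrowT, hcolU⟩ := hp.isWarpingVariable_indicator
    exact ⟨_, _, hmb, hwb, hrow, hcol, h₁₁, hinner, hrowT, hcolU,
      (qpObjective_mappingVariable_indicator hM hp).symm⟩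
  · rintro _ ⟨m, w, hmb, hwb, hrow, hcol, h₁₁, hinner, hrowT, hcolU, rfl⟩
    exact exists_mem_dtgwValues_le_qpObjective hT hU hd hΔG0 hΔH0 hΔd' ⟨hmb, hrow, hcol⟩
      ⟨hwb, h₁₁, hinner, hrowT, hcolU⟩

/-- the optimal value of the quadratic program equals the
dtgw-distance (both minima exist and coincide). -/
theorem qp_value_eq_dtgw {k : ℕ} (nV nW : ℕ) (T U : ℕ) (hT : 1 ≤ T) (hU : 1 ≤ U)
    (EG : ℕ → Finset (Sym2 (Fin nV))) (FH : ℕ → Finset (Sym2 (Fin nW)))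
    (f : ℕ → Fin nV → (Fin k → ℚ)) (g : ℕ → Fin nW → (Fin k → ℚ))
    (d : (Fin k → ℚ) → (Fin k → ℚ) → ℚ)
    (hd0 : ∀ a b, d a b = 0 ↔ a = b)
    (hdsymm : ∀ a b, d a b = d b a)
    (hdtri : ∀ a b c, d a c ≤ d a b + d b c)
    (ΔG : ℕ → Fin nV → ℚ) (ΔH : ℕ → Fin nW → ℚ)
    (hΔG0 : ∀ s i, 0 ≤ ΔG s i) (hΔH0 : ∀ t j, 0 ≤ ΔH t j)
    (hΔd : ∀ s, 1 ≤ s → s ≤ T → ∀ t, 1 ≤ t → t ≤ U → ∀ i j,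
      d (f s i) (g t j) ≤ ΔG s i + ΔH t j) :
    ∃ x : ℚ,
      IsLeast {x : ℚ |
        ∃ (m : Fin (nV + 1) → Fin (nW + 1) → ℕ) (w : ℕ → ℕ → ℕ),
          (∀ i j, m i j = 0 ∨ m i j = 1) ∧
          (∀ s t, w s t = 0 ∨ w s t = 1) ∧
          (∀ i : Fin nV, ∑ j : Fin (nW + 1), m i.castSucc j = 1) ∧
          (∀ j : Fin nW, ∑ i : Fin (nV + 1), m i j.castSucc = 1) ∧
          w 1 1 = 1 ∧
          (∀ s t, 1 ≤ s → s ≤ T - 1 → 1 ≤ t → t ≤ U - 1 →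
            w s t ≤ w (s + 1) (t + 1) + w s (t + 1) + w (s + 1) t) ∧
          (∀ t, 1 ≤ t → t ≤ U - 1 → w T t ≤ w T (t + 1)) ∧
          (∀ s, 1 ≤ s → s ≤ T - 1 → w s U ≤ w (s + 1) U) ∧
          x = ∑ s ∈ Finset.Icc 1 T, ∑ t ∈ Finset.Icc 1 U,
              ∑ i : Fin (nV + 1), ∑ j : Fin (nW + 1),
                QPcoeff nV nW f g d ΔG ΔH s t i j * (w s t : ℚ) * (m i j : ℚ)} x ∧
      IsLeast {x : ℚ |
        ∃ (M : Finset (Fin nV × Fin nW)) (p : Finset (ℕ × ℕ)),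
          IsVertexMapping M ∧ IsWarpingPath T U p ∧
          x = ∑ q ∈ p, ((∑ a ∈ M, d (f q.1 a.1) (g q.2 a.2)) +
            (∑ v ∈ Finset.univ \ M.image Prod.fst, ΔG q.1 v) +
            (∑ w' ∈ Finset.univ \ M.image Prod.snd, ΔH q.2 w'))} x :=
  qp_value_eq_dtgw_general nV nW T U hT hU f g d hd0 hdsymm hdtri ΔG ΔH hΔG0 hΔH0 hΔd
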